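/- Let n ≥ 5 and let ε ∈ Aut Dₙ have order 3. Then ε ∈ W(Dₙ), and rank Dₙ^ε = n − 2c for some integer c with 1 ≤ c ≤ n/3. Moreover, if ε₁, ε₂ ∈ Aut Dₙ both have order 3 and rank Dₙ^{ε₁} = rank Dₙ^{ε₂}, then ε₁ and ε₂ are conjugate by an element of W(Dₙ). -/

import Mathlib

section Infra
variable {L : Type*} [AddCommGroup L]

/-- The multiplicative group structure (composition) on `AddAut L`, as in the older Mathlib. -/
instance addAutGroupComp {M : Type*} [Add M] : Group (AddAut M) where
  mul g h := AddEquiv.trans h g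
  one := AddEquiv.refl _
  inv := AddEquiv.symm
  mul_assoc _ _ _ := rfl
  one_mul _ := rfl
  mul_one _ := rfl
  inv_mul_cancel := AddEquiv.self_trans_symm

/-- The subgroup of fixed points of an automorphism of an abelian group. -/
def fixedPts (f : AddAut L) : AddSubgroup L where
  carrier := {x | f x = x}
  add_mem' := by
    intro a b ha hb
    simp only [Set.mem_setOf_eq, map_add] at *
    rw [ha, hb]
  zero_mem' := by simp
  neg_mem' := by
    intro a ha
    simp only [Set.mem_setOf_eq, map_neg] at *
    rw [ha]

/-- The isometry group of a `ℤ`-valued form: the group of all automorphisms of the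
additive group preserving the form.  For a lattice `(L, B)` this is `Aut L`. -/
def IsometryGrp (B : L → L → ℤ) : Subgroup (AddAut L) where
  carrier := {f | ∀ x y, B (f x) (f y) = B x y}
  one_mem' := by intro x y; rfl
  mul_mem' := by
    intro a b ha hb x y
    have h : ∀ z, (a * b) z = a (b z) := fun z => rfl
    simp only [Set.mem_setOf_eq] at *
    rw [h, h, ha, hb]
  inv_mem' := by
    intro a ha x y
    simp only [Set.mem_setOf_eq] at *
    have h := ha (a⁻¹ x) (a⁻¹ y)
    have h1 : a (a⁻¹ x) = x := a.apply_symm_apply x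
    have h2 : a (a⁻¹ y) = y := a.apply_symm_apply y
    rw [h1, h2] at h
    exact h.symm

/-- The Weyl group of a lattice `(L, B)`: the subgroup generated by the reflections
`r_α : x ↦ x − B(x,α)•α` in the norm-2 vectors `α`. -/
def WeylGrp (B : L → L → ℤ) : Subgroup (AddAut L) :=
  Subgroup.closure {w | ∃ α : L, B α α = 2 ∧ ∀ x, w x = x - B x α • α}

/-- The root lattice of `(L, B)`: the subgroup generated by the norm-2 vectors. -/
def rootLat (B : L → L → ℤ) : AddSubgroup L :=
  AddSubgroup.closure {α | B α α = 2}

/-- The rank of the fixed-point sublattice of an automorphism. -/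
noncomputable def fixedRank (f : AddAut L) : ℕ :=
  Module.finrank ℤ ↥(fixedPts f)

end Infra

/-- An isomorphism of lattices: an isomorphism of the underlying abelian groups
(equivalently, a `ℤ`-linear isomorphism) preserving the forms. -/
def FormIso {M N : Type*} [AddCommGroup M] [AddCommGroup N]
    (BM : M → M → ℤ) (BN : N → N → ℤ) : Prop :=
  ∃ e : M ≃+ N, ∀ x y, BN (e x) (e y) = BM x y

/-- The standard dot product on `ι → ℤ`. -/
def dotF {ι : Type*} [Fintype ι] (x y : ι → ℤ) : ℤ := ∑ i, x i * y i

/-- The root lattice `Aₙ ⊆ ℤ^{n+1}`. -/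
def AnS (n : ℕ) : AddSubgroup (Fin (n + 1) → ℤ) where
  carrier := {x | ∑ i, x i = 0}
  add_mem' := by
    intro a b ha hb
    simp only [Set.mem_setOf_eq, Pi.add_apply, Finset.sum_add_distrib] at *
    rw [ha, hb]; ring
  zero_mem' := by simp
  neg_mem' := by
    intro a ha
    simp only [Set.mem_setOf_eq, Pi.neg_apply, Finset.sum_neg_distrib] at *
    rw [ha]; ring

/-- The root lattice `Dₙ ⊆ ℤⁿ`. -/
def DnS (n : ℕ) : AddSubgroup (Fin n → ℤ) where
  carrier := {x | (2 : ℤ) ∣ ∑ i, x i}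
  add_mem' := by
    intro a b ha hb
    simp only [Set.mem_setOf_eq, Pi.add_apply, Finset.sum_add_distrib] at *
    exact dvd_add ha hb
  zero_mem' := by simp
  neg_mem' := by
    intro a ha
    simp only [Set.mem_setOf_eq, Pi.neg_apply, Finset.sum_neg_distrib] at *
    exact ha.neg_right

/-- The inner product on a root lattice, restricted from the ambient dot product. -/
def rootF {n : ℕ} (S : AddSubgroup (Fin n → ℤ)) (x y : ↥S) : ℤ := dotF x.val y.val

/-!
For `n ≥ 5` the vectors `±2eᵢ` are the only norm-4 vectors of `Dₙ` whose inner products with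
all of `Dₙ` are even, so every isometry permutes them and is a signed permutation
`signedPerm s π`, with `(signedPerm s π x) (π i) = s i * x i`. If it has order 3, then `π³ = 1`
and the signs multiply to 1 along every orbit of `π`; conjugating by the signed permutation
with signs `s ∘ π` removes the signs, and a permutation conjugates `π` to the product
`threeCycles c` of the 3-cycles `(3k 3k+1 3k+2)`, `k < c`.

Signed permutations whose signs multiply to 1 are products of the reflections in the roots
`eₐ ± e_b`, hence lie in `W(Dₙ)`. If the conjugator has sign product `-1`, composing it with
the sign change on the first 3-cycle, which commutes with `threeCycles c`, fixes this. Finally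
the fixed lattice of `threeCycles c` has one coordinate per orbit, hence rank `n - 2c`.
-/

open Equiv Finset

section AddAut

variable {L : Type*} [AddCommGroup L]

lemma addAut_mul_apply (f g : AddAut L) (x : L) : (f * g) x = f (g x) := rfl
lemma addAut_inv_apply (f : AddAut L) (x : L) : f⁻¹ x = f.symm x := rfl
lemma addAut_one_apply (x : L) : (1 : AddAut L) x = x := rfl

lemma mem_fixedPts {f : AddAut L} {x : L} : x ∈ fixedPts f ↔ f x = x := Iff.rfl

lemma map_fixedPts_conj (w f : AddAut L) :
    (fixedPts (w⁻¹ * f * w)).map (w : L →+ L) = fixedPts f := by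
  ext x
  simp only [AddSubgroup.mem_map, mem_fixedPts, addAut_mul_apply, addAut_inv_apply,
    AddEquiv.symm_apply_eq]
  exact ⟨fun ⟨y, hy, hyx⟩ => hyx ▸ hy, fun hx => ⟨w.symm x, by simpa using hx, by simp⟩⟩

lemma fixedRank_conj (w f : AddAut L) : fixedRank (w⁻¹ * f * w) = fixedRank f := by
  unfold fixedRank
  rw [← map_fixedPts_conj w f]
  exact ((w : L ≃+ L).addSubgroupMap _).toIntLinearEquiv.finrank_eq

end AddAut

namespace Equiv.Perm

variable {α : Type*} [Fintype α] [DecidableEq α] {p : ℕ} [Fact p.Prime]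

lemma card_support_of_pow_prime_eq_one {σ : Perm α} (h : σ ^ p = 1) :
    #σ.support = p * σ.cycleType.card := by
  rw [← sum_cycleType, cycleType_of_pow_prime_eq_one h, Multiset.sum_replicate, smul_eq_mul,
    Multiset.card_replicate, mul_comm]

lemma isConj_of_pow_prime_eq_one {σ τ : Perm α} (hσ : σ ^ p = 1) (hτ : τ ^ p = 1)
    (h : #σ.support = #τ.support) : IsConj σ τ := by
  have hp := (Fact.out : p.Prime).pos
  rw [isConj_iff_cycleType_eq, cycleType_of_pow_prime_eq_one hσ, cycleType_of_pow_prime_eq_one hτ]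
  rw [card_support_of_pow_prime_eq_one hσ, card_support_of_pow_prime_eq_one hτ] at h
  rw [Nat.eq_of_mul_eq_mul_left hp h]

end Equiv.Perm

section ThreeCycles

variable {n : ℕ}

def rotateBlocks (c j : ℕ) : ℕ := if j < 3 * c then 3 * (j / 3) + (j + 1) % 3 else j

lemma rotateBlocks_lt {c j : ℕ} (hc : 3 * c ≤ n) (hj : j < n) : rotateBlocks c j < n := by
  unfold rotateBlocks; split_ifs <;> omega

lemma rotateBlocks_rotateBlocks_rotateBlocks (c j : ℕ) :
    rotateBlocks c (rotateBlocks c (rotateBlocks c j)) = j := by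
  unfold rotateBlocks; split_ifs <;> omega

/-- The product of the 3-cycles `(3k 3k+1 3k+2)`, `k < c`. -/
def threeCycles (c : ℕ) (hc : 3 * c ≤ n) : Perm (Fin n) where
  toFun j := ⟨rotateBlocks c j, rotateBlocks_lt hc j.2⟩
  invFun j := ⟨rotateBlocks c (rotateBlocks c j), rotateBlocks_lt hc (rotateBlocks_lt hc j.2)⟩
  left_inv j := Fin.ext (rotateBlocks_rotateBlocks_rotateBlocks c j)
  right_inv j := Fin.ext (rotateBlocks_rotateBlocks_rotateBlocks c j)

lemma threeCycles_val {c : ℕ} (hc : 3 * c ≤ n) (j : Fin n) :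
    (threeCycles c hc j : ℕ) = rotateBlocks c j := rfl

lemma threeCycles_pow_three {c : ℕ} (hc : 3 * c ≤ n) : threeCycles c hc ^ 3 = 1 :=
  Equiv.ext fun j => Fin.ext <| by
    rw [pow_three, Perm.mul_apply, Perm.mul_apply, Perm.one_apply, threeCycles_val,
      threeCycles_val, threeCycles_val, rotateBlocks_rotateBlocks_rotateBlocks]

lemma card_support_threeCycles {c : ℕ} (hc : 3 * c ≤ n) : #(threeCycles c hc).support = 3 * c := by
  have : (threeCycles c hc).support = ({j | (j : ℕ) < 3 * c} : Finset (Fin n)) := by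
    ext j
    simp only [Perm.mem_support, ne_eq, Fin.ext_iff, threeCycles_val, mem_filter, mem_univ,
      true_and, rotateBlocks]
    split_ifs <;> omega
  rw [this, Fin.card_filter_val_lt, min_eq_right hc]

end ThreeCycles

lemma Int.units_mul_units_mul (u : ℤˣ) (a : ℤ) : (u : ℤ) * (u * a) = a := by
  rw [← mul_assoc, ← Units.val_mul, Int.units_mul_self, Units.val_one, one_mul]

lemma Int.two_dvd_units_mul_sub (u : ℤˣ) (a : ℤ) : 2 ∣ (u : ℤ) * a - a := by
  rcases Int.units_eq_one_or u with rfl | rfl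
  · simp
  · exact ⟨-a, by push_cast; ring⟩

lemma exists_eq_single_of_dotProduct_self_eq_one {ι : Type*} [Fintype ι] [DecidableEq ι]
    {w : ι → ℤ} (h : w ⬝ᵥ w = 1) : ∃ (p : ι) (u : ℤˣ), w = Pi.single p (u : ℤ) := by
  obtain ⟨p, hp⟩ : ∃ p, w p ≠ 0 := by
    by_contra! hw
    simp [dotProduct, hw] at h
  have hsplit := add_sum_erase univ (fun j => w j * w j) (mem_univ p)
  have hrest : 0 ≤ ∑ j ∈ univ.erase p, w j * w j := sum_nonneg fun j _ => mul_self_nonneg (w j)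
  have hwp : w p * w p = 1 := by
    have := Int.one_le_abs hp
    rw [dotProduct] at h
    nlinarith [abs_mul_abs_self (w p)]
  refine ⟨p, (IsUnit.of_mul_eq_one _ hwp).unit, funext fun j => ?_⟩
  rcases eq_or_ne j p with rfl | hj
  · simp
  · have hzero := (sum_eq_zero_iff_of_nonneg (s := univ.erase p)
      fun j _ => mul_self_nonneg (w j)).1 (by rw [dotProduct] at h; omega) j (by simp [hj])
    simpa [hj] using hzero

lemma exists_eq_single_two_of_dotProduct_self_eq_four {ι : Type*} [Fintype ι] [DecidableEq ι]
    (hcard : 5 ≤ Fintype.card ι) {v : ι → ℤ} (h : v ⬝ᵥ v = 4) (hpar : ∀ a b, 2 ∣ v a - v b) :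
    ∃ (p : ι) (u : ℤˣ), v = Pi.single p (2 * u : ℤ) := by
  obtain ⟨i⟩ : Nonempty ι := Fintype.card_pos_iff.1 (by omega)
  by_cases hi : 2 ∣ v i
  · choose w hw using fun j => (hpar j i).add hi
    simp only [sub_add_cancel] at hw
    obtain ⟨p, u, hwpu⟩ := exists_eq_single_of_dotProduct_self_eq_one (w := w) (by
      have : v ⬝ᵥ v = 4 * (w ⬝ᵥ w) := by simp [dotProduct, hw, mul_sum]; ring_nf
      omega)
    refine ⟨p, u, funext fun j => ?_⟩
    rw [hw j, hwpu, Pi.single_apply, Pi.single_apply]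
    split_ifs <;> simp
  · have hodd : ∀ j, 1 ≤ v j * v j := fun j => by
      have : v j ≠ 0 := fun h0 => hi (by simpa [h0] using hpar j i)
      nlinarith [Int.one_le_abs this, abs_mul_abs_self (v j)]
    have := sum_le_sum fun j (_ : j ∈ univ) => hodd j
    simp only [sum_const, card_univ, nsmul_eq_mul, mul_one] at this
    rw [dotProduct] at h
    omega

namespace DnS

variable {n : ℕ}

lemma mem_iff {v : Fin n → ℤ} : v ∈ DnS n ↔ 2 ∣ ∑ i, v i := Iff.rfl

lemma rootF_eq_dotProduct (x y : DnS n) : rootF (DnS n) x y = (x : Fin n → ℤ) ⬝ᵥ y := rfl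

lemma single_two_mem (i : Fin n) : Pi.single i 2 ∈ DnS n := by
  simp [mem_iff]

lemma single_sub_single_mem (a b : Fin n) (u : ℤˣ) :
    Pi.single a 1 - Pi.single b (u : ℤ) ∈ DnS n := by
  simpa [mem_iff, sum_sub_distrib] using (Int.two_dvd_units_mul_sub u 1).neg_right

lemma units_mul_comp_mem (s : Fin n → ℤˣ) (π : Perm (Fin n)) {v : Fin n → ℤ} (hv : v ∈ DnS n) :
    (fun j => (s (π.symm j) : ℤ) * v (π.symm j)) ∈ DnS n := by
  rw [mem_iff, Equiv.sum_comp π.symm (fun i => (s i : ℤ) * v i),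
    ← add_sub_cancel (∑ i, v i) (∑ i, (s i : ℤ) * v i), ← sum_sub_distrib]
  exact dvd_add hv (dvd_sum fun i _ => Int.two_dvd_units_mul_sub (s i) (v i))

def signedPerm (s : Fin n → ℤˣ) (π : Perm (Fin n)) : AddAut (DnS n) where
  toFun x := ⟨fun j => s (π.symm j) * x.1 (π.symm j), units_mul_comp_mem s π x.2⟩
  invFun x := ⟨fun i => s i * x.1 (π i), by simpa using units_mul_comp_mem (s ∘ π.symm) π.symm x.2⟩
  left_inv x := Subtype.ext <| funext fun i => by simp [Int.units_mul_units_mul]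
  right_inv x := Subtype.ext <| funext fun j => by simp [Int.units_mul_units_mul]
  map_add' x y := Subtype.ext <| funext fun j => by simp [mul_add]

@[simp]
lemma signedPerm_apply (s : Fin n → ℤˣ) (π : Perm (Fin n)) (x : DnS n) (j : Fin n) :
    (signedPerm s π x : Fin n → ℤ) j = s (π.symm j) * (x : Fin n → ℤ) (π.symm j) := rfl

lemma signedPerm_apply_apply (s : Fin n → ℤˣ) (π : Perm (Fin n)) (x : DnS n) (i : Fin n) :
    (signedPerm s π x : Fin n → ℤ) (π i) = s i * (x : Fin n → ℤ) i := by
  simp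

lemma eq_signedPerm {f : AddAut (DnS n)} {s : Fin n → ℤˣ} {π : Perm (Fin n)}
    (h : ∀ x i, (f x : Fin n → ℤ) (π i) = s i * (x : Fin n → ℤ) i) : f = signedPerm s π :=
  AddEquiv.ext fun x => Subtype.ext <| funext fun j => by
    rw [← π.apply_symm_apply j, h, signedPerm_apply_apply]

lemma signedPerm_mul (s t : Fin n → ℤˣ) (π σ : Perm (Fin n)) :
    signedPerm s π * signedPerm t σ = signedPerm (s ∘ σ * t) (π * σ) :=
  eq_signedPerm fun x i => by
    simp [addAut_mul_apply, Perm.mul_apply, mul_assoc]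

lemma signedPerm_one_one : signedPerm (1 : Fin n → ℤˣ) 1 = 1 :=
  (eq_signedPerm fun _ _ => by simp [addAut_one_apply]).symm

/-- The reflection in the root `eₐ - u e_b`. -/
lemma signedPerm_swap_mem_weylGrp {a b : Fin n} (hab : a ≠ b) (u : ℤˣ) :
    signedPerm (Pi.mulSingle a u * Pi.mulSingle b u) (swap a b) ∈ WeylGrp (rootF (DnS n)) := by
  have hu := Int.units_mul_self u
  refine Subgroup.subset_closure ⟨⟨_, single_sub_single_mem a b u⟩, ?_, fun x => ?_⟩
  · simp [rootF_eq_dotProduct, hab, hab.symm, ← Units.val_mul, hu]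
  · refine Subtype.ext (funext fun j => ?_)
    have hu' : (u : ℤ) * u = 1 := by rw [← Units.val_mul, hu, Units.val_one]
    simp only [signedPerm_apply, Pi.mul_apply, Units.val_mul, AddSubgroup.coe_sub,
      AddSubgroup.coe_zsmul, rootF_eq_dotProduct, dotProduct_sub, dotProduct_single, Pi.sub_apply,
      Pi.smul_apply, smul_eq_mul, mul_one]
    rcases eq_or_ne j a with rfl | hja
    · simp [hab.symm, mul_comm]
    rcases eq_or_ne j b with rfl | hjb
    · simp [hab]
      linear_combination (x : Fin n → ℤ) j * hu'
    · simp [swap_apply_of_ne_of_ne hja hjb, hja, hjb]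

lemma signedPerm_one_mem_weylGrp (π : Perm (Fin n)) :
    signedPerm 1 π ∈ WeylGrp (rootF (DnS n)) := by
  induction π using Perm.swap_induction_on with
  | one => rw [signedPerm_one_one]; exact one_mem _
  | swap_mul π a b hab ih =>
    have h := signedPerm_swap_mem_weylGrp hab 1
    rw [Pi.mulSingle_one, Pi.mulSingle_one, mul_one] at h
    simpa [signedPerm_mul] using mul_mem h ih

lemma signedPerm_mulSingle_mem_weylGrp (a b : Fin n) (u : ℤˣ) :
    signedPerm (Pi.mulSingle a u * Pi.mulSingle b u) 1 ∈ WeylGrp (rootF (DnS n)) := by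
  rcases eq_or_ne a b with rfl | hab
  · rw [← Pi.mulSingle_mul, Int.units_mul_self, Pi.mulSingle_one, signedPerm_one_one]
    exact one_mem _
  have hsymm : (Pi.mulSingle a u * Pi.mulSingle b u : Fin n → ℤˣ) ∘ swap a b =
      Pi.mulSingle a u * Pi.mulSingle b u := by
    funext j
    rcases eq_or_ne j a with rfl | hja
    · simp [hab, mul_comm]
    rcases eq_or_ne j b with rfl | hjb
    · simp [hab.symm, mul_comm]
    · simp [swap_apply_of_ne_of_ne hja hjb]
  have h := mul_mem (signedPerm_swap_mem_weylGrp hab u) (signedPerm_swap_mem_weylGrp hab 1)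
  rwa [Pi.mulSingle_one, Pi.mulSingle_one, mul_one, signedPerm_mul, hsymm, mul_one,
    swap_mul_self] at h

lemma signedPerm_mem_weylGrp {s : Fin n → ℤˣ} (hs : ∏ i, s i = 1) (π : Perm (Fin n)) :
    signedPerm s π ∈ WeylGrp (rootF (DnS n)) := by
  have hsπ : signedPerm s π = signedPerm 1 π * signedPerm s 1 := by
    simp [signedPerm_mul]
  rw [hsπ]
  refine mul_mem (signedPerm_one_mem_weylGrp π) ?_
  rcases isEmpty_or_nonempty (Fin n) with hn | ⟨⟨a⟩⟩
  · rw [Subsingleton.elim s 1, signedPerm_one_one]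
    exact one_mem _
  let φ : (Fin n → ℤˣ) →* AddAut (DnS n) :=
    MonoidHom.mk' (signedPerm · 1) fun s t => by rw [signedPerm_mul]; rfl
  have hdecomp : s = ∏ i, Pi.mulSingle i (s i) * Pi.mulSingle a (s i) := by
    rw [prod_mul_distrib, univ_prod_mulSingle]
    have := map_prod (MonoidHom.mulSingle (fun _ : Fin n => ℤˣ) a) s univ
    simp_all
  show s ∈ (WeylGrp (rootF (DnS n))).comap φ
  rw [hdecomp]
  exact Subgroup.prod_mem _ fun i _ => signedPerm_mulSingle_mem_weylGrp i a (s i)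

def twoSingle (i : Fin n) : DnS n := ⟨Pi.single i 2, single_two_mem i⟩

@[simp]
lemma coe_twoSingle (i : Fin n) : (twoSingle i : Fin n → ℤ) = Pi.single i 2 := rfl

theorem exists_eq_signedPerm (hn : 5 ≤ n) {f : AddAut (DnS n)}
    (hf : f ∈ IsometryGrp (rootF (DnS n))) : ∃ s π, f = signedPerm s π := by
  have hf' : ∀ x y, rootF (DnS n) (f x) (f y) = rootF (DnS n) x y := hf
  have himage : ∀ i, ∃ (p : Fin n) (u : ℤˣ),
      (f (twoSingle i) : Fin n → ℤ) = Pi.single p (2 * u : ℤ) := by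
    intro i
    refine exists_eq_single_two_of_dotProduct_self_eq_four (by simpa using hn) ?_ fun a b => ?_
    · simpa [rootF_eq_dotProduct] using hf' (twoSingle i) (twoSingle i)
    · have := hf' (twoSingle i) (f.symm ⟨_, single_sub_single_mem a b 1⟩)
      rw [f.apply_symm_apply] at this
      simp [rootF_eq_dotProduct] at this
      exact ⟨_, this⟩
  choose p u hpu using himage
  have hcoord : ∀ x i, (f x : Fin n → ℤ) (p i) = u i * (x : Fin n → ℤ) i := by
    intro x i
    have := hf' x (twoSingle i)
    rw [rootF_eq_dotProduct, rootF_eq_dotProduct, hpu] at this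
    simp only [coe_twoSingle, dotProduct_single] at this
    calc (f x : Fin n → ℤ) (p i) = u i * (u i * (f x : Fin n → ℤ) (p i)) :=
          (Int.units_mul_units_mul _ _).symm
      _ = u i * (x : Fin n → ℤ) i := by congr 1; linarith
  have hinj : Function.Injective p := by
    intro a b hab
    by_contra hne
    have := hf' (twoSingle a) (twoSingle b)
    rw [rootF_eq_dotProduct, rootF_eq_dotProduct, hpu, hpu, hab] at this
    simp [hne] at this
  exact ⟨u, Equiv.ofBijective p (Finite.injective_iff_bijective.1 hinj), eq_signedPerm hcoord⟩

lemma signedPerm_eq_one_iff {s : Fin n → ℤˣ} {π : Perm (Fin n)} :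
    signedPerm s π = 1 ↔ s = 1 ∧ π = 1 := by
  refine ⟨fun h => ?_, fun ⟨hs, hπ⟩ => hs ▸ hπ ▸ signedPerm_one_one⟩
  have key : ∀ i, (s i : ℤ) * 2 = (Pi.single i 2 : Fin n → ℤ) (π i) := fun i => by
    simpa [signedPerm_apply_apply, addAut_one_apply] using
      congrArg (fun g : AddAut (DnS n) => (g (twoSingle i) : Fin n → ℤ) (π i)) h
  have hπ : ∀ i, π i = i := fun i => by
    by_contra hi
    simpa [Pi.single_eq_of_ne hi] using key i
  refine ⟨funext fun i => Units.ext ?_, Equiv.ext hπ⟩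
  simpa [hπ i] using key i

lemma signedPerm_pow_three (s : Fin n → ℤˣ) (π : Perm (Fin n)) :
    signedPerm s π ^ 3 = signedPerm (s ∘ ⇑(π * π) * (s ∘ π * s)) (π * (π * π)) := by
  rw [pow_three, signedPerm_mul, signedPerm_mul]

lemma semiconjBy_signedPerm_one {s : Fin n → ℤˣ} {π σ τ : Perm (Fin n)}
    (hs : s ∘ ⇑(π * π) * (s ∘ π * s) = 1) (hσ : SemiconjBy σ π τ) :
    SemiconjBy (signedPerm (s ∘ π) σ) (signedPerm s π) (signedPerm 1 τ) := by
  rw [SemiconjBy, signedPerm_mul, signedPerm_mul, hσ.eq]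
  congr 1
  funext i
  have hi : s (π i) * (s (π (π i)) * s i) = 1 := by
    simpa [mul_left_comm] using congrFun hs i
  simpa [Int.units_inv_eq_self] using eq_inv_of_mul_eq_one_right hi

lemma exists_mem_weylGrp_semiconjBy {ε E : AddAut (DnS n)} {u t : Fin n → ℤˣ} {σ : Perm (Fin n)}
    (hu : ∏ i, u i = -1) (hcomm : Commute (signedPerm u 1) E)
    (h : SemiconjBy (signedPerm t σ) ε E) : ∃ w ∈ WeylGrp (rootF (DnS n)), SemiconjBy w ε E := by
  rcases Int.units_eq_one_or (∏ i, t i) with ht | ht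
  · exact ⟨_, signedPerm_mem_weylGrp ht σ, h⟩
  refine ⟨signedPerm u 1 * signedPerm t σ, ?_, SemiconjBy.mul_left hcomm h⟩
  rw [signedPerm_mul]
  refine signedPerm_mem_weylGrp ?_ _
  simp [prod_mul_distrib, Equiv.prod_comp, hu, ht]

lemma mem_fixedPts_signedPerm_one {π : Perm (Fin n)} {x : DnS n} :
    x ∈ fixedPts (signedPerm 1 π) ↔ ∀ j, (x : Fin n → ℤ) (π j) = (x : Fin n → ℤ) j := by
  rw [mem_fixedPts]
  refine ⟨fun h j => ?_, fun h => Subtype.ext (funext fun j => ?_)⟩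
  · simpa [signedPerm_apply_apply] using congrArg (fun y : DnS n => (y : Fin n → ℤ) (π j)) h.symm
  · simpa using (h (π.symm j)).symm

lemma fixedRank_signedPerm_one {m : ℕ} {π : Perm (Fin n)} (T : Fin m → Fin n) (b : Fin n → Fin m)
    (hbπ : ∀ j, b (π j) = b j) (hbT : ∀ k, b (T k) = k) (hTb : ∀ j, ∃ k : ℕ, (π ^ k) j = T (b j)) :
    fixedRank (signedPerm 1 π) = m := by
  set F := fixedPts (signedPerm (1 : Fin n → ℤˣ) π)
  have hconst : ∀ x ∈ F, ∀ j, (x : Fin n → ℤ) (T (b j)) = (x : Fin n → ℤ) j := by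
    intro x hx j
    obtain ⟨k, hk⟩ := hTb j
    rw [← hk]
    clear hk
    induction k with
    | zero => rfl
    | succ k ih => rw [pow_succ', Perm.mul_apply, mem_fixedPts_signedPerm_one.1 hx, ih]
  let A : F →+ (Fin m → ℤ) :=
    { toFun x k := (x.1 : Fin n → ℤ) (T k), map_zero' := rfl, map_add' _ _ := rfl }
  let B : (Fin m → ℤ) →+ F :=
    { toFun y := ⟨⟨fun j => 2 * y (b j), dvd_sum fun j _ => dvd_mul_right 2 _⟩,
        mem_fixedPts_signedPerm_one.2 fun j => by simp [hbπ]⟩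
      map_zero' := by ext; simp
      map_add' _ _ := by ext; simp [mul_add] }
  have hA : Function.Injective A := by
    refine (injective_iff_map_eq_zero A).2 fun x hx => ?_
    refine Subtype.ext (Subtype.ext (funext fun j => ?_))
    rw [← hconst x x.2 j]
    exact congrFun hx (b j)
  have hB : Function.Injective B := by
    refine (injective_iff_map_eq_zero B).2 fun y hy => funext fun k => ?_
    have := congrArg (fun x : F => (x.1 : Fin n → ℤ) (T k)) hy
    simpa [B, hbT] using this
  have : Module.Finite ℤ F := Module.Finite.of_injective A.toIntLinearMap hA
  have h₁ := LinearMap.finrank_le_finrank_of_injective (f := A.toIntLinearMap) hA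
  have h₂ := LinearMap.finrank_le_finrank_of_injective (f := B.toIntLinearMap) hB
  simp only [Module.finrank_fin_fun] at h₁ h₂
  exact le_antisymm h₁ h₂

lemma fixedRank_threeCycles {c : ℕ} (hc : 3 * c ≤ n) :
    fixedRank (signedPerm 1 (threeCycles c hc)) + 2 * c = n := by
  let T : Fin (n - 2 * c) → Fin n :=
    fun k => ⟨if (k : ℕ) < c then 3 * k else k + 2 * c, by split_ifs <;> omega⟩
  let b : Fin n → Fin (n - 2 * c) :=
    fun j => ⟨if (j : ℕ) < 3 * c then j / 3 else j - 2 * c, by split_ifs <;> omega⟩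
  have hTb : ∀ j, ∃ k : ℕ, (threeCycles c hc ^ k) j = T (b j) := by
    intro j
    have hj := j.2
    by_cases h : (j : ℕ) < 3 * c
    · obtain ⟨k, hk3, hk⟩ : ∃ k, k < 3 ∧ ((j : ℕ) + k) % 3 = 0 :=
        ⟨(3 - (j : ℕ) % 3) % 3, by omega, by omega⟩
      refine ⟨k, Fin.ext ?_⟩
      interval_cases k <;>
        simp only [T, b, pow_succ, pow_zero, one_mul, Perm.mul_apply, Perm.one_apply,
          threeCycles_val, rotateBlocks] <;> split_ifs <;> omega
    · exact ⟨0, Fin.ext <| by simp only [T, b, pow_zero, Perm.one_apply]; split_ifs <;> omega⟩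
  rw [fixedRank_signedPerm_one T b
    (fun j => Fin.ext <| by simp only [b, threeCycles_val, rotateBlocks]; split_ifs <;> omega)
    (fun k => Fin.ext <| by simp only [T, b]; split_ifs <;> omega) hTb]
  omega

lemma exists_prod_eq_neg_one_commute_threeCycles {c : ℕ} (hc : 3 * c ≤ n) (h1c : 1 ≤ c) :
    ∃ u : Fin n → ℤˣ, ∏ i, u i = -1 ∧
      Commute (signedPerm u 1) (signedPerm 1 (threeCycles c hc)) := by
  refine ⟨fun j => if (j : ℕ) < 3 then -1 else 1, ?_, ?_⟩
  · rw [prod_ite, prod_const, prod_const_one, Fin.card_filter_val_lt, min_eq_right (by omega)]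
    rfl
  · have h : ∀ j, (threeCycles c hc j : ℕ) < 3 ↔ (j : ℕ) < 3 := fun j => by
      rw [threeCycles_val, rotateBlocks]; split_ifs <;> omega
    rw [Commute, SemiconjBy, signedPerm_mul, signedPerm_mul]
    congr 1
    funext j
    simp [h]

theorem exists_weylGrp_conj_threeCycles (hn : 5 ≤ n) {ε : AddAut (DnS n)}
    (hε : ε ∈ IsometryGrp (rootF (DnS n))) (h3 : orderOf ε = 3) :
    ∃ c, ∃ hc : 3 * c ≤ n, 1 ≤ c ∧
      ∃ w ∈ WeylGrp (rootF (DnS n)), w⁻¹ * signedPerm 1 (threeCycles c hc) * w = ε := by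
  have : Fact (Nat.Prime 3) := ⟨Nat.prime_three⟩
  obtain ⟨s, π, rfl⟩ := exists_eq_signedPerm hn hε
  have hpow := pow_orderOf_eq_one (signedPerm s π)
  rw [h3, signedPerm_pow_three, signedPerm_eq_one_iff, ← pow_three] at hpow
  obtain ⟨hs, hπ3⟩ := hpow
  have hπ1 : π ≠ 1 := by
    rintro rfl
    have : s = 1 := funext fun i => by simpa [Int.units_mul_self] using congrFun hs i
    rw [this, signedPerm_one_one, orderOf_one] at h3
    omega
  have hsupp := Perm.card_support_of_pow_prime_eq_one hπ3
  set c := π.cycleType.card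
  have hc : 3 * c ≤ n := hsupp ▸ (card_le_univ _).trans (by simp)
  obtain ⟨σ, hσ⟩ := isConj_iff.1 (Perm.isConj_of_pow_prime_eq_one hπ3 (threeCycles_pow_three hc)
    (hsupp.trans (card_support_threeCycles hc).symm))
  have h1c : 1 ≤ c := Perm.card_cycleType_pos.2 hπ1
  obtain ⟨u, hu, hcomm⟩ := exists_prod_eq_neg_one_commute_threeCycles hc h1c
  obtain ⟨w, hw, hwε⟩ := exists_mem_weylGrp_semiconjBy hu hcomm
    (semiconjBy_signedPerm_one hs (σ := σ) (by rw [SemiconjBy, ← hσ]; group))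
  exact ⟨c, hc, h1c, w, hw, by rw [mul_assoc, ← hwε.eq]; group⟩

end DnS

/-- Let `n ≥ 5` and `ε ∈ Aut Dₙ` of order 3.  Then `ε ∈ W(Dₙ)` and
`rank Dₙ^ε = n − 2c` for some `1 ≤ c ≤ n/3`; moreover any two order-3 automorphisms
with the same fixed-point rank are conjugate by an element of `W(Dₙ)`. -/
theorem stmt8 (n : ℕ) (hn : 5 ≤ n)
    (ε : ↥(IsometryGrp (rootF (DnS n)))) (hord : orderOf ε = 3) :
    ((ε : AddAut ↥(DnS n)) ∈ WeylGrp (rootF (DnS n)) ∧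
      ∃ c : ℕ, 1 ≤ c ∧ 3 * c ≤ n ∧
        fixedRank (ε : AddAut ↥(DnS n)) + 2 * c = n) ∧
    (∀ ε₁ ε₂ : ↥(IsometryGrp (rootF (DnS n))), orderOf ε₁ = 3 → orderOf ε₂ = 3 →
      fixedRank (ε₁ : AddAut ↥(DnS n)) = fixedRank (ε₂ : AddAut ↥(DnS n)) →
      ∃ w ∈ WeylGrp (rootF (DnS n)),
        w⁻¹ * (ε₁ : AddAut ↥(DnS n)) * w = (ε₂ : AddAut ↥(DnS n))) := by
  have conj (ε : ↥(IsometryGrp (rootF (DnS n)))) (h : orderOf ε = 3) :=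
    DnS.exists_weylGrp_conj_threeCycles hn ε.2 (by rwa [Subgroup.orderOf_coe])
  refine ⟨?_, fun ε₁ ε₂ h₁ h₂ hrank => ?_⟩
  · obtain ⟨c, hc, h1c, w, hw, hwε⟩ := conj ε hord
    refine ⟨hwε ▸ mul_mem (mul_mem (inv_mem hw) (DnS.signedPerm_mem_weylGrp prod_const_one _)) hw,
      c, h1c, hc, ?_⟩
    rw [← hwε, fixedRank_conj, DnS.fixedRank_threeCycles]
  · obtain ⟨c₁, hc₁, -, w₁, hw₁, hε₁⟩ := conj ε₁ h₁
    obtain ⟨c₂, hc₂, -, w₂, hw₂, hε₂⟩ := conj ε₂ h₂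
    have hrank₁ := DnS.fixedRank_threeCycles hc₁
    have hrank₂ := DnS.fixedRank_threeCycles hc₂
    rw [← hε₁, ← hε₂, fixedRank_conj, fixedRank_conj] at hrank
    obtain rfl : c₁ = c₂ := by omega
    refine ⟨w₁⁻¹ * w₂, mul_mem (inv_mem hw₁) hw₂, ?_⟩
    rw [← hε₁, ← hε₂]
    group
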